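/- Let d > 0, a, b ∈ ℝ, τ > 0, and g, f : ℝ → ℝ Lipschitz with constants G, F. If there exists α > 0 with -(d - α) + G|a| + F|b|e^{ατ} ≤ 0, then the autonomous delay equation u'(t) = -d·u(t) + a·g(u(t)) + b·f(u(t-τ)) + I (I constant) has at most one equilibrium point, and every solution converges to it exponentially with rate α if an equilibrium exists. -/

import Mathlib

/-!
Writing `w = u - e`, the deviation from an equilibrium solves `w' = -d w + r` with
`|r t| ≤ G|a| |w t| + F|b| |w (t - τ)|`. As long as `|w| < M e^{-αs}` holds up to time `T`, the
delayed term costs at most a factor `e^{ατ}`, so the stability condition gives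
`|r s| ≤ M (d - α) e^{-αs}` on `[0, T]`; then `e^{ds} (± w s - M e^{-αs})` is antitone there, so
the bound cannot first fail at `T` when `M` exceeds the initial bound `B`. Letting `M ↓ B` gives
exponential stability, and uniqueness follows because a second equilibrium is a constant solution.
-/

open Real Set

lemma nonneg_of_abs_sub_le_mul {g : ℝ → ℝ} {G : ℝ} (hg : ∀ p q, |g p - g q| ≤ G * |p - q|) :
    0 ≤ G := by
  simpa using (abs_nonneg _).trans (hg 1 0)

lemma lt_mul_exp_neg_of_hasDerivAt {w r : ℝ → ℝ} {d α M T : ℝ}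
    (hw : ∀ t, HasDerivAt w (-d * w t + r t) t)
    (hr : ∀ s ∈ Icc 0 T, r s ≤ M * (d - α) * exp (-α * s)) (h0 : w 0 < M) (hT : 0 ≤ T) :
    w T < M * exp (-α * T) := by
  set φ : ℝ → ℝ := fun s => exp (d * s) * (w s - M * exp (-α * s))
  have hφ : ∀ s, HasDerivAt φ (exp (d * s) * (r s - M * (d - α) * exp (-α * s))) s := by
    intro s
    have hexp : ∀ c : ℝ, HasDerivAt (fun s => exp (c * s)) (exp (c * s) * c) s := fun c => by
      simpa using ((hasDerivAt_id s).const_mul c).exp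
    exact ((hexp d).mul ((hw s).sub ((hexp (-α)).const_mul M))).congr_deriv
      (by simp only [Pi.sub_apply]; ring)
  have hanti : AntitoneOn φ (Icc 0 T) := by
    refine antitoneOn_of_hasDerivWithinAt_nonpos (convex_Icc 0 T)
      (fun s _ => (hφ s).continuousAt.continuousWithinAt) (fun s _ => (hφ s).hasDerivWithinAt)
      fun s hs => ?_
    have := hr s (interior_subset hs)
    exact mul_nonpos_of_nonneg_of_nonpos (exp_pos _).le (by linarith)
  have hφT : φ T < 0 :=
    (hanti ⟨le_rfl, hT⟩ ⟨hT, le_rfl⟩ hT).trans_lt (by simpa [φ] using h0)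
  have := neg_of_mul_neg_right hφT (exp_pos _).le
  linarith

lemma abs_lt_mul_exp_neg_of_hasDerivAt {w r : ℝ → ℝ} {d α M T : ℝ}
    (hw : ∀ t, HasDerivAt w (-d * w t + r t) t)
    (hr : ∀ s ∈ Icc 0 T, |r s| ≤ M * (d - α) * exp (-α * s)) (h0 : |w 0| < M) (hT : 0 ≤ T) :
    |w T| < M * exp (-α * T) := by
  rw [abs_lt] at h0 ⊢
  refine ⟨?_, lt_mul_exp_neg_of_hasDerivAt hw (fun s hs => (le_abs_self _).trans (hr s hs))
    h0.2 hT⟩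
  have hneg : ∀ t, HasDerivAt (-w) (-d * (-w) t + -r t) t := fun t =>
    (hw t).neg.congr_deriv (by simp only [Pi.neg_apply]; ring)
  have := lt_mul_exp_neg_of_hasDerivAt hneg (fun s hs => (neg_le_abs _).trans (hr s hs))
    (by simpa using neg_lt.mp h0.1) hT
  simp only [Pi.neg_apply] at this
  linarith

lemma exists_first_le_of_lt_of_nonpos {φ ψ : ℝ → ℝ} (hφ : Continuous φ) (hψ : Continuous ψ)
    (h0 : ∀ s ≤ 0, φ s < ψ s) {t : ℝ} (ht : ψ t ≤ φ t) :
    ∃ T, 0 ≤ T ∧ ψ T ≤ φ T ∧ ∀ s ≤ T, φ s ≤ ψ s := by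
  set S := {s | ψ s ≤ φ s}
  have hS_pos : ∀ s ∈ S, 0 < s := fun s hs => not_le.mp fun hs0 => (h0 s hs0).not_ge hs
  have hbdd : BddBelow S := ⟨0, fun s hs => (hS_pos s hs).le⟩
  have hmem : sInf S ∈ S := (isClosed_le hψ hφ).csInf_mem ⟨t, ht⟩ hbdd
  refine ⟨sInf S, (hS_pos _ hmem).le, hmem, ?_⟩
  have hbefore : Iio (sInf S) ⊆ {s | φ s ≤ ψ s} := fun s hs =>
    show φ s ≤ ψ s from (not_le.mp fun h : ψ s ≤ φ s => (csInf_le hbdd h).not_gt hs).le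
  exact fun s hs => (isClosed_le hφ hψ).closure_subset_iff.mpr hbefore (by rwa [closure_Iio])

theorem abs_le_mul_exp_neg_of_hasDerivAt_delay {w r : ℝ → ℝ} {d τ α c₁ c₂ B : ℝ}
    (hτ : 0 ≤ τ) (hα : 0 ≤ α) (hc₁ : 0 ≤ c₁) (hc₂ : 0 ≤ c₂)
    (hc : c₁ + c₂ * exp (α * τ) ≤ d - α)
    (hw : ∀ t, HasDerivAt w (-d * w t + r t) t)
    (hr : ∀ t, |r t| ≤ c₁ * |w t| + c₂ * |w (t - τ)|)
    (hB : ∀ s ≤ 0, |w s| ≤ B) (t : ℝ) : |w t| ≤ B * exp (-α * t) := by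
  have hw_cont : Continuous w := continuous_iff_continuousAt.mpr fun t => (hw t).continuousAt
  have hB0 : 0 ≤ B := (abs_nonneg _).trans (hB 0 le_rfl)
  suffices h : ∀ ε > 0, ∀ t, |w t| < (B + ε) * exp (-α * t) by
    have key : |w t| * exp (α * t) ≤ B := le_of_forall_pos_lt_add fun ε hε => by
      have := mul_lt_mul_of_pos_right (h ε hε t) (exp_pos (α * t))
      rwa [mul_assoc, ← exp_add, neg_mul, neg_add_cancel, exp_zero, mul_one] at this
    rwa [← le_div_iff₀ (exp_pos _), div_eq_mul_inv, ← exp_neg, ← neg_mul] at key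
  intro ε hε t
  by_contra! hcross
  have hpast : ∀ s ≤ 0, |w s| < (B + ε) * exp (-α * s) := fun s hs => calc
    |w s| ≤ B := hB s hs
    _ < B + ε := by linarith
    _ ≤ (B + ε) * exp (-α * s) := le_mul_of_one_le_right (by linarith) (one_le_exp (by nlinarith))
  obtain ⟨T, hT, hT_cross, hT_before⟩ := exists_first_le_of_lt_of_nonpos
    hw_cont.abs (continuous_const.mul (continuous_exp.comp (continuous_const_mul _))) hpast hcross
  refine hT_cross.not_gt (abs_lt_mul_exp_neg_of_hasDerivAt (M := B + ε) hw (fun s hs => ?_)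
    ((hB 0 le_rfl).trans_lt (by linarith)) hT)
  have hshift : exp (-α * (s - τ)) = exp (α * τ) * exp (-α * s) := by
    rw [← exp_add]; ring_nf
  calc |r s| ≤ c₁ * |w s| + c₂ * |w (s - τ)| := hr s
    _ ≤ c₁ * ((B + ε) * exp (-α * s)) + c₂ * ((B + ε) * exp (-α * (s - τ))) := by
      gcongr
      · exact hT_before s hs.2
      · exact hT_before _ (by linarith [hs.2])
    _ = (B + ε) * (c₁ + c₂ * exp (α * τ)) * exp (-α * s) := by rw [hshift]; ring
    _ ≤ (B + ε) * (d - α) * exp (-α * s) := by gcongr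

theorem stmt7_general (d a b Ic τ G F α : ℝ) (g f : ℝ → ℝ)
    (hτ : 0 < τ)
    (hg : ∀ p q, |g p - g q| ≤ G * |p - q|)
    (hf : ∀ p q, |f p - f q| ≤ F * |p - q|)
    (hα : 0 < α)
    (hstab : -(d - α) + G * |a| + F * |b| * Real.exp (α * τ) ≤ 0) :
    (∀ e₁ e₂ : ℝ, -d * e₁ + a * g e₁ + b * f e₁ + Ic = 0 →
        -d * e₂ + a * g e₂ + b * f e₂ + Ic = 0 → e₁ = e₂) ∧
    (∀ e : ℝ, -d * e + a * g e + b * f e + Ic = 0 →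
      ∀ u : ℝ → ℝ,
        (∀ t, HasDerivAt u
          (-d * u t + a * g (u t) + b * f (u (t - τ)) + Ic) t) →
        ∀ B : ℝ, (∀ s ≤ (0 : ℝ), |u s - e| ≤ B) →
          ∀ t ≥ (0 : ℝ), |u t - e| ≤ B * Real.exp (-α * t)) := by
  have hG := nonneg_of_abs_sub_le_mul hg
  have hF := nonneg_of_abs_sub_le_mul hf
  have stable : ∀ e, -d * e + a * g e + b * f e + Ic = 0 → ∀ u : ℝ → ℝ,
      (∀ t, HasDerivAt u (-d * u t + a * g (u t) + b * f (u (t - τ)) + Ic) t) →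
      ∀ B, (∀ s ≤ (0 : ℝ), |u s - e| ≤ B) → ∀ t, |u t - e| ≤ B * exp (-α * t) := by
    intro e he u hu B hB
    refine abs_le_mul_exp_neg_of_hasDerivAt_delay (d := d) (c₁ := G * |a|) (c₂ := F * |b|)
      (w := fun t => u t - e)
      (r := fun t => a * (g (u t) - g e) + b * (f (u (t - τ)) - f e)) hτ.le hα.le
      (by positivity) (by positivity) (by linarith) (fun t => ?_) (fun t => ?_) hB
    · exact (hu t).sub_const e |>.congr_deriv (by linear_combination he)
    · calc |a * (g (u t) - g e) + b * (f (u (t - τ)) - f e)|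
          ≤ |a| * |g (u t) - g e| + |b| * |f (u (t - τ)) - f e| :=
            (abs_add_le _ _).trans_eq (by rw [abs_mul, abs_mul])
        _ ≤ |a| * (G * |u t - e|) + |b| * (F * |u (t - τ) - e|) := by gcongr <;> apply_assumption
        _ = G * |a| * |u t - e| + F * |b| * |u (t - τ) - e| := by ring
  refine ⟨fun e₁ e₂ h₁ h₂ => ?_, fun e he u hu B hB t _ => stable e he u hu B hB t⟩
  have hcontract := stable e₁ h₁ (fun _ => e₂) (fun t => (hasDerivAt_const t e₂).congr_deriv
    (by linear_combination -h₂)) |e₂ - e₁| (fun _ _ => le_rfl) 1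
  have hexp : exp (-α * 1) < 1 := exp_lt_one_iff.mpr (by linarith)
  have : |e₂ - e₁| ≤ 0 := by nlinarith [abs_nonneg (e₂ - e₁)]
  linarith [abs_nonpos_iff.mp this]

/-- uniqueness of the equilibrium of the constant-coefficient
delay equation u' = -d u + a g(u) + b f(u(t-τ)) + I and its global exponential
stability with rate α. -/
theorem stmt7 (d a b Ic τ G F α : ℝ) (g f : ℝ → ℝ)
    (hd : 0 < d) (hτ : 0 < τ)
    (hg : ∀ p q, |g p - g q| ≤ G * |p - q|)
    (hf : ∀ p q, |f p - f q| ≤ F * |p - q|)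
    (hα : 0 < α)
    (hstab : -(d - α) + G * |a| + F * |b| * Real.exp (α * τ) ≤ 0) :
    (∀ e₁ e₂ : ℝ, -d * e₁ + a * g e₁ + b * f e₁ + Ic = 0 →
        -d * e₂ + a * g e₂ + b * f e₂ + Ic = 0 → e₁ = e₂) ∧
    (∀ e : ℝ, -d * e + a * g e + b * f e + Ic = 0 →
      ∀ u : ℝ → ℝ,
        (∀ t, HasDerivAt u
          (-d * u t + a * g (u t) + b * f (u (t - τ)) + Ic) t) →
        ∀ B : ℝ, (∀ s ≤ (0 : ℝ), |u s - e| ≤ B) →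
          ∀ t ≥ (0 : ℝ), |u t - e| ≤ B * Real.exp (-α * t)) :=
  stmt7_general d a b Ic τ G F α g f hτ hg hf hα hstab
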